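/- (Small cross-entropy loss of the non-robust multi-class network) Let d, k ≥ 1 with d ≥ 2 and 2(k+1) · ln d < √d, and let μ : Fin k → ℝ^d be orthogonal equinorm cluster features with binary cluster labels s. Consider the multi-class network F̃ with components f_j(x) = ReLU(⟨μ_j + Σ_{l : s l = s j} μ_l, x⟩) and softmax probabilities p_j(x) = exp(f_j(x)) / Σ_{l ∈ Fin k} exp(f_l(x)). Then with probability at least 1 − 2k · d^{−(ln d)/2} over (J, ξ) ~ (uniform on Fin k) ⊗ γ_d, the per-point cross-entropy loss at x = μ_J + ξ satisfies −log p_J(x) ≤ k · exp(−(d − 2(k+1) · √d · ln d)). -/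

import Mathlib

open MeasureTheory ProbabilityTheory Real Finset
open scoped RealInnerProductSpace

/-- The standard Gaussian measure on `ℝ^d`. -/
noncomputable def stdGaussian (d : ℕ) : Measure (EuclideanSpace ℝ (Fin d)) :=
  (Measure.pi fun _ : Fin d => gaussianReal 0 1).map (MeasurableEquiv.toLp 2 (Fin d → ℝ))

/-- The ReLU activation. -/
noncomputable def relu (z : ℝ) : ℝ := max z 0

/-- The `j`-th component of the non-robust multi-class network. -/
noncomputable def fMulti {d k : ℕ} (μ : Fin k → EuclideanSpace ℝ (Fin d)) (s : Fin k → ℝ)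
    (j : Fin k) (x : EuclideanSpace ℝ (Fin d)) : ℝ :=
  relu ⟪μ j + ∑ l ∈ univ.filter (fun l => s l = s j), μ l, x⟫

/-- The softmax probability of class `j` under the non-robust multi-class network. -/
noncomputable def pMulti {d k : ℕ} (μ : Fin k → EuclideanSpace ℝ (Fin d)) (s : Fin k → ℝ)
    (j : Fin k) (x : EuclideanSpace ℝ (Fin d)) : ℝ :=
  Real.exp (fMulti μ s j x) / ∑ l : Fin k, Real.exp (fMulti μ s l x)

/-!
On the event that `|⟪μ l, ξ⟫| < √d ln d` for every `l`, orthogonality pins down the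
pre-activations at `x = μ J + ξ` up to an error `(k+1) √d ln d`: the true class `J` sees
`‖μ J‖² = d` twice (in its own weight and in the sum over its label class), every other class at
most once. The softmax margin is therefore `d - 2(k+1) √d ln d`, and
`-log p_J = log ∑ₗ exp (f_l - f_J) ≤ ∑_{l ≠ J} exp (f_l - f_J)` is at most `k` times its negative
exponential. Each `⟪μ l, ξ⟫` is `N(0, d)`, so the Gaussian Chernoff bound and a union bound over
`l` and the sign show that the event fails with probability at most
`2k exp (-(ln d)² / 2) = 2k d^(-(ln d) / 2)`.
-/

open scoped NNReal ENNReal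

section Gaussian

variable {E : Type*} [NormedAddCommGroup E] [InnerProductSpace ℝ E] [FiniteDimensional ℝ E]
  [MeasurableSpace E] [BorelSpace E]

lemma map_inner_stdGaussian (v : E) :
    (ProbabilityTheory.stdGaussian E).map (⟪v, ·⟫) = gaussianReal 0 (‖v‖₊ ^ 2) := by
  have h := IsGaussian.map_eq_gaussianReal (μ := ProbabilityTheory.stdGaussian E) (innerSL ℝ v)
  rw [integral_strongDual_stdGaussian, variance_dual_stdGaussian, innerSL_apply_norm] at h
  convert h using 2
  · ext; simp
  · ext; simp

lemma hasSubgaussianMGF_of_map_eq_gaussianReal {Ω : Type*} [MeasurableSpace Ω] {P : Measure Ω}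
    [IsProbabilityMeasure P] {X : Ω → ℝ} {v : ℝ≥0} (hX : P.map X = gaussianReal 0 v) :
    HasSubgaussianMGF X v P where
  integrable_exp_mul t := by
    rw [← mgf_pos_iff, mgf_gaussianReal hX]
    exact exp_pos _
  mgf_le t := by rw [mgf_gaussianReal hX, zero_mul, zero_add]

lemma stdGaussian_real_le_abs_inner_le (v : E) {B : ℝ} (hB : 0 ≤ B) :
    (ProbabilityTheory.stdGaussian E).real {x | B ≤ |⟪v, x⟫|} ≤
      2 * exp (-B ^ 2 / (2 * ‖v‖ ^ 2)) := by
  have tail (w : E) (hw : ‖w‖ = ‖v‖) :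
      (ProbabilityTheory.stdGaussian E).real {x | B ≤ ⟪w, x⟫} ≤ exp (-B ^ 2 / (2 * ‖v‖ ^ 2)) := by
    have := (hasSubgaussianMGF_of_map_eq_gaussianReal (map_inner_stdGaussian w)).measure_ge_le hB
    simpa [hw] using this
  have hsub : {x | B ≤ |⟪v, x⟫|} ⊆ {x | B ≤ ⟪v, x⟫} ∪ {x | B ≤ ⟪-v, x⟫} := by
    intro x (hx : B ≤ |⟪v, x⟫|)
    rcases le_abs'.mp hx with h | h
    · right
      change B ≤ ⟪-v, x⟫
      rw [inner_neg_left]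
      linarith
    · exact Or.inl h
  calc _ ≤ _ := measureReal_mono hsub
    _ ≤ _ := measureReal_union_le _ _
    _ ≤ _ := by linarith [tail v rfl, tail (-v) (norm_neg v)]

lemma one_sub_le_stdGaussian_real_forall_abs_inner_lt {ι : Type*} [Fintype ι] (v : ι → E)
    {σ B : ℝ} (hv : ∀ i, ‖v i‖ = σ) (hB : 0 ≤ B) :
    1 - 2 * Fintype.card ι * exp (-B ^ 2 / (2 * σ ^ 2)) ≤
      (ProbabilityTheory.stdGaussian E).real {x | ∀ i, |⟪v i, x⟫| < B} := by
  have hcompl : {x | ∀ i, |⟪v i, x⟫| < B}ᶜ = ⋃ i, {x : E | B ≤ |⟪v i, x⟫|} := by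
    ext x
    simp
  have hmeas : MeasurableSet {x : E | ∀ i, |⟪v i, x⟫| < B} := by
    simp only [Set.ofPred_forall]
    exact MeasurableSet.iInter fun i => measurableSet_lt (by fun_prop) measurable_const
  have hbad : (ProbabilityTheory.stdGaussian E).real (⋃ i, {x : E | B ≤ |⟪v i, x⟫|}) ≤
      2 * Fintype.card ι * exp (-B ^ 2 / (2 * σ ^ 2)) :=
    calc _ ≤ ∑ i, (ProbabilityTheory.stdGaussian E).real {x : E | B ≤ |⟪v i, x⟫|} :=
          measureReal_iUnion_fintype_le _
      _ ≤ ∑ _i : ι, 2 * exp (-B ^ 2 / (2 * σ ^ 2)) := by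
          gcongr with i
          simpa [hv i] using stdGaussian_real_le_abs_inner_le (v i) hB
      _ = _ := by rw [Finset.sum_const, Finset.card_univ, nsmul_eq_mul]; ring
  rw [← hcompl, probReal_compl_eq_one_sub hmeas] at hbad
  linarith

end Gaussian

lemma stdGaussian_eq_stdGaussian_euclideanSpace (d : ℕ) :
    _root_.stdGaussian d = ProbabilityTheory.stdGaussian (EuclideanSpace ℝ (Fin d)) :=
  map_pi_eq_stdGaussian

lemma inv_card_smul_count_prod_univ_prod {α β : Type*} [Fintype α] [Nonempty α] [MeasurableSpace α]
    [MeasurableSingletonClass α] [MeasurableSpace β] (ν : Measure β) [SigmaFinite ν] (s : Set β) :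
    (((Fintype.card α : ℝ≥0∞)⁻¹ • (Measure.count : Measure α)).prod ν) (Set.univ ×ˢ s) = ν s := by
  rw [Measure.prod_prod, Measure.smul_apply, Measure.count_univ, ENat.card_eq_coe_fintype_card,
    ENat.toENNReal_coe, smul_eq_mul, ENNReal.inv_mul_cancel (by simp) (by simp), one_mul]

lemma neg_log_softmax_le {ι : Type*} [Fintype ι] (f : ι → ℝ) (J : ι) {g : ℝ}
    (hg : ∀ l ≠ J, f l + g ≤ f J) :
    -log (exp (f J) / ∑ l, exp (f l)) ≤ Fintype.card ι * exp (-g) := by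
  classical
  set T := ∑ l, exp (f l - f J)
  have hT : 0 < T := Finset.sum_pos (fun l _ => exp_pos _) ⟨J, Finset.mem_univ J⟩
  have hsum : ∑ l, exp (f l) = exp (f J) * T := by
    rw [Finset.mul_sum]
    exact Finset.sum_congr rfl fun l _ => by rw [← exp_add, add_sub_cancel]
  have hT_sub_one : T - 1 = ∑ l ∈ univ.erase J, exp (f l - f J) := by
    rw [show T = _ from (Finset.add_sum_erase _ _ (Finset.mem_univ J)).symm, sub_self, exp_zero,
      add_sub_cancel_left]
  calc -log (exp (f J) / ∑ l, exp (f l))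
      = log T := by rw [hsum, div_mul_cancel_left₀ (exp_ne_zero _), log_inv, neg_neg]
    _ ≤ T - 1 := log_le_sub_one_of_pos hT
    _ ≤ ∑ _l ∈ univ.erase J, exp (-g) := by
        rw [hT_sub_one]
        gcongr with l hl
        linarith [hg l (Finset.ne_of_mem_erase hl)]
    _ ≤ Fintype.card ι * exp (-g) := by
        rw [Finset.sum_const, nsmul_eq_mul, Finset.card_erase_of_mem (Finset.mem_univ J)]
        gcongr
        exact_mod_cast Nat.sub_le _ _

section Orthogonal

variable {ι E : Type*} [NormedAddCommGroup E] [InnerProductSpace ℝ E] {v : ι → E}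

lemma sum_inner_eq_ite_of_orthogonal (horth : ∀ i j, i ≠ j → ⟪v i, v j⟫ = 0)
    [DecidableEq ι] (S : Finset ι) (j : ι) :
    ⟪∑ l ∈ S, v l, v j⟫ = if j ∈ S then ‖v j‖ ^ 2 else 0 := by
  rw [sum_inner]
  split_ifs with hj
  · rw [Finset.sum_eq_single_of_mem j hj fun l _ hl => horth l j hl, real_inner_self_eq_norm_sq]
  · exact Finset.sum_eq_zero fun l hl => horth l j (ne_of_mem_of_not_mem hl hj)

lemma abs_inner_add_sum_le {x : E} {B : ℝ} (hx : ∀ i, |⟪v i, x⟫| ≤ B) (j : ι) (S : Finset ι) :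
    |⟪v j + ∑ l ∈ S, v l, x⟫| ≤ (S.card + 1) * B := by
  rw [inner_add_left, sum_inner]
  calc |⟪v j, x⟫ + ∑ l ∈ S, ⟪v l, x⟫| ≤ |⟪v j, x⟫| + ∑ l ∈ S, |⟪v l, x⟫| :=
        (abs_add_le _ _).trans (add_le_add_right (Finset.abs_sum_le_sum_abs _ _) _)
    _ ≤ B + ∑ _l ∈ S, B := by gcongr <;> apply hx
    _ = (S.card + 1) * B := by rw [Finset.sum_const, nsmul_eq_mul]; ring

end Orthogonal

section Network

variable {d k : ℕ} {μ : Fin k → EuclideanSpace ℝ (Fin d)}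

lemma abs_inner_add_sum_sub_le (hnorm : ∀ j, ‖μ j‖ = √d) (horth : ∀ i j, i ≠ j → ⟪μ i, μ j⟫ = 0)
    {ξ : EuclideanSpace ℝ (Fin d)} {B : ℝ} (hξ : ∀ l, |⟪μ l, ξ⟫| ≤ B)
    (j J : Fin k) (S : Finset (Fin k)) :
    |⟪μ j + ∑ l ∈ S, μ l, μ J + ξ⟫ - ((if j = J then (d : ℝ) else 0) + if J ∈ S then (d : ℝ) else 0)|
      ≤ (k + 1) * B := by
  have hsq : ‖μ J‖ ^ 2 = d := by rw [hnorm, sq_sqrt (Nat.cast_nonneg _)]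
  have hself : ⟪μ j, μ J⟫ = if j = J then (d : ℝ) else 0 := by
    split_ifs with h
    · rw [h, real_inner_self_eq_norm_sq, hsq]
    · exact horth j J h
  rw [inner_add_right, inner_add_left (μ j), sum_inner_eq_ite_of_orthogonal horth, hself, hsq,
    add_sub_cancel_left]
  have hS : (S.card : ℝ) ≤ k := by exact_mod_cast (card_le_univ S).trans_eq (Fintype.card_fin k)
  have hB : 0 ≤ B := (abs_nonneg _).trans (hξ j)
  calc _ ≤ (S.card + 1) * B := abs_inner_add_sum_le hξ j S
    _ ≤ (k + 1) * B := by gcongr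

lemma fMulti_add_le_of_ne (hnorm : ∀ j, ‖μ j‖ = √d) (horth : ∀ i j, i ≠ j → ⟪μ i, μ j⟫ = 0)
    (s : Fin k → ℝ) {ξ : EuclideanSpace ℝ (Fin d)} {B : ℝ} (hξ : ∀ l, |⟪μ l, ξ⟫| ≤ B)
    {j J : Fin k} (hj : j ≠ J) :
    fMulti μ s j (μ J + ξ) + (d - 2 * (k + 1) * B) ≤ fMulti μ s J (μ J + ξ) := by
  have hJ := abs_le.mp (abs_inner_add_sum_sub_le hnorm horth hξ J J (univ.filter (s · = s J)))
  have hj' := abs_le.mp (abs_inner_add_sum_sub_le hnorm horth hξ j J (univ.filter (s · = s j)))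
  have hlabel : (if J ∈ univ.filter (s · = s j) then (d : ℝ) else 0) ≤ d := by
    split_ifs <;> simp
  simp only [if_neg hj, Finset.mem_filter, Finset.mem_univ, true_and, if_true] at hJ hj' hlabel
  unfold fMulti relu
  refine le_trans ?_ (le_max_left _ _)
  rcases le_total ⟪μ j + ∑ l ∈ univ.filter (s · = s j), μ l, μ J + ξ⟫ 0 with h | h
  · rw [max_eq_right h]; linarith
  · rw [max_eq_left h]; linarith

lemma neg_log_pMulti_le (hnorm : ∀ j, ‖μ j‖ = √d) (horth : ∀ i j, i ≠ j → ⟪μ i, μ j⟫ = 0)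
    (s : Fin k → ℝ) {ξ : EuclideanSpace ℝ (Fin d)} {B : ℝ} (hξ : ∀ l, |⟪μ l, ξ⟫| ≤ B) (J : Fin k) :
    -log (pMulti μ s J (μ J + ξ)) ≤ k * exp (-(d - 2 * (k + 1) * B)) := by
  have h := neg_log_softmax_le (fun l => fMulti μ s l (μ J + ξ)) J
    fun l hl => fMulti_add_le_of_ne hnorm horth s hξ hl
  rwa [Fintype.card_fin] at h

end Network

theorem multiclass_small_cross_entropy_general (d k : ℕ) (hd : 2 ≤ d) (hk : 1 ≤ k)
    (μ : Fin k → EuclideanSpace ℝ (Fin d))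
    (hnorm : ∀ j, ‖μ j‖ = Real.sqrt d)
    (horth : ∀ i j, i ≠ j → ⟪μ i, μ j⟫ = 0)
    (s : Fin k → ℝ) :
    ENNReal.ofReal (1 - 2 * k * (d : ℝ) ^ (-(Real.log d) / 2)) ≤
      (((k : ENNReal)⁻¹ • (Measure.count : Measure (Fin k))).prod (stdGaussian d))
        {p : Fin k × EuclideanSpace ℝ (Fin d) |
          -Real.log (pMulti μ s p.1 (μ p.1 + p.2)) ≤
            k * Real.exp (-((d : ℝ) - 2 * (k + 1) * Real.sqrt d * Real.log d))} := by
  have hd0 : (0 : ℝ) < d := by exact_mod_cast (by omega : 0 < d)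
  have : Nonempty (Fin k) := ⟨⟨0, hk⟩⟩
  set B := √d * log d
  set G := {ξ : EuclideanSpace ℝ (Fin d) | ∀ l, |⟪μ l, ξ⟫| < B}
  have hexponent : (d : ℝ) ^ (-(log d) / 2) = exp (-B ^ 2 / (2 * √d ^ 2)) := by
    rw [rpow_def_of_pos hd0, mul_pow, sq_sqrt hd0.le]
    field_simp
  have hG : ENNReal.ofReal (1 - 2 * k * (d : ℝ) ^ (-(log d) / 2)) ≤ stdGaussian d G := by
    rw [stdGaussian_eq_stdGaussian_euclideanSpace, ← ofReal_measureReal, hexponent]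
    refine ENNReal.ofReal_le_ofReal ?_
    simpa only [Fintype.card_fin] using one_sub_le_stdGaussian_real_forall_abs_inner_lt μ hnorm
      (mul_nonneg (sqrt_nonneg _) (log_natCast_nonneg d))
  calc _ ≤ stdGaussian d G := hG
    _ = (((k : ENNReal)⁻¹ • (Measure.count : Measure (Fin k))).prod (stdGaussian d))
          (Set.univ ×ˢ G) := by
        rw [stdGaussian_eq_stdGaussian_euclideanSpace]
        simpa only [Fintype.card_fin] using
          (inv_card_smul_count_prod_univ_prod (α := Fin k) (ProbabilityTheory.stdGaussian _) G).symm
    _ ≤ _ := by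
        refine measure_mono ?_
        rintro ⟨J, ξ⟩ ⟨-, hξ⟩
        have h := neg_log_pMulti_le hnorm horth s (fun l => (hξ l).le) J
        rwa [← mul_assoc] at h

theorem multiclass_small_cross_entropy (d k : ℕ) (hd : 2 ≤ d) (hk : 1 ≤ k)
    (hlog : 2 * (k + 1) * Real.log d < Real.sqrt d)
    (μ : Fin k → EuclideanSpace ℝ (Fin d))
    (hnorm : ∀ j, ‖μ j‖ = Real.sqrt d)
    (horth : ∀ i j, i ≠ j → ⟪μ i, μ j⟫ = 0)
    (s : Fin k → ℝ) (hs : ∀ j, s j = 1 ∨ s j = -1) :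
    ENNReal.ofReal (1 - 2 * k * (d : ℝ) ^ (-(Real.log d) / 2)) ≤
      (((k : ENNReal)⁻¹ • (Measure.count : Measure (Fin k))).prod (stdGaussian d))
        {p : Fin k × EuclideanSpace ℝ (Fin d) |
          -Real.log (pMulti μ s p.1 (μ p.1 + p.2)) ≤
            k * Real.exp (-((d : ℝ) - 2 * (k + 1) * Real.sqrt d * Real.log d))} :=
  multiclass_small_cross_entropy_general d k hd hk μ hnorm horth s
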